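/- arXiv:2510.13748 — 3 statements merged into one kernel-verified Lean document; each statement's English description precedes it below -/
import Mathlib

section
/- Let n ≥ 2 and S be a positive integer with S/4 an integer ≥ 2 (so S is divisible by 4 and S ≥ 8). Set n₀ = ⌊n/2⌋ and n₁ = n - n₀. Then for each i ∈ {0,1} there exist nonnegative integers s₋₁, s₀, s₊₁ with s₊₁ ≥ S/36 and s₀ > 0 such that s₋₁·(⌊n_i/(S/2)⌋ - 1) + s₀·⌊n_i/(S/2)⌋ + s₊₁·(⌊n_i/(S/2)⌋ + 1) = n_i. -/
/-!
Write `m = H q + r` with `H = S / 2`, `q = m / H` and `0 ≤ r < H`. Weights `s₋₁ + s₀ + s₊₁ = H`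
on `q - 1, q, q + 1` with `s₊₁ - s₋₁ = r` sum to `H q + r = m`. If `r ≥ ⌈S/36⌉` take
`(s₋₁, s₀, s₊₁) = (0, H - r, r)`; otherwise shift weight `⌈S/36⌉ - r` from the middle to both
outer terms, which keeps `s₀ > 0` because `⌈S/36⌉` is much smaller than `H`.
-/

lemma weighted_consecutive_eq {H m sm s0 sp : ℕ} (hsum : sm + s0 + sp = H)
    (hdiff : sp = sm + m % H) :
    (sm : ℤ) * ((m / H : ℕ) - 1) + (s0 : ℤ) * ((m / H : ℕ)) + (sp : ℤ) * ((m / H : ℕ) + 1)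
      = (m : ℤ) := by
  have hdiv : (H : ℤ) * (m / H : ℕ) + (m % H : ℕ) = m := by exact_mod_cast Nat.div_add_mod m H
  have hsumZ : (sm : ℤ) + s0 + sp = H := by exact_mod_cast hsum
  have hdiffZ : (sp : ℤ) = sm + (m % H : ℕ) := by exact_mod_cast hdiff
  linear_combination hdiv + ((m / H : ℕ) : ℤ) * hsumZ + hdiffZ

lemma exists_weighted_consecutive_eq {H m t : ℕ} (hH : 0 < H) (ht : 2 * t < H + m % H) :
    ∃ sm s0 sp : ℕ, t ≤ sp ∧ 0 < s0 ∧
      (sm : ℤ) * ((m / H : ℕ) - 1) + (s0 : ℤ) * ((m / H : ℕ)) + (sp : ℤ) * ((m / H : ℕ) + 1)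
        = (m : ℤ) := by
  have hr : m % H < H := Nat.mod_lt m hH
  by_cases htr : t ≤ m % H
  · exact ⟨0, H - m % H, m % H, htr, by omega, weighted_consecutive_eq (by omega) (by omega)⟩
  · exact ⟨t - m % H, H + m % H - 2 * t, t, le_rfl, by omega,
      weighted_consecutive_eq (by omega) (by omega)⟩

theorem stmt_0_general (n S : ℕ) (hS : 8 ≤ S) :
    ∀ m ∈ ({n / 2, n - n / 2} : Set ℕ),
      ∃ sm s0 sp : ℕ,
        (S : ℝ) / 36 ≤ (sp : ℝ) ∧ 0 < s0 ∧
        (sm : ℤ) * ((m / (S / 2) : ℕ) - 1) + (s0 : ℤ) * ((m / (S / 2) : ℕ))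
          + (sp : ℤ) * ((m / (S / 2) : ℕ) + 1) = (m : ℤ) := by
  intro m _
  obtain ⟨sm, s0, sp, hsp, hs0, heq⟩ :=
    exists_weighted_consecutive_eq (H := S / 2) (m := m) (t := (S + 35) / 36)
      (by omega) (by omega)
  refine ⟨sm, s0, sp, ?_, hs0, heq⟩
  rw [div_le_iff₀ (by norm_num : (0 : ℝ) < 36)]
  exact_mod_cast (by omega : S ≤ sp * 36)

/-- Lemma: decomposition into latent-state sizes. For `n ≥ 2` and `S` divisible by 4 with
`S ≥ 8`, setting `n₀ = ⌊n/2⌋`, `n₁ = n - n₀`, for each `m ∈ {n₀, n₁}` there exist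
nonnegative integers `s₋₁, s₀, s₊₁` with `s₊₁ ≥ S/36`, `s₀ > 0`, and
`s₋₁·(⌊m/(S/2)⌋ - 1) + s₀·⌊m/(S/2)⌋ + s₊₁·(⌊m/(S/2)⌋ + 1) = m`. -/
theorem stmt_0 (n S : ℕ) (hn : 2 ≤ n) (hS4 : 4 ∣ S) (hS : 8 ≤ S) :
    ∀ m ∈ ({n / 2, n - n / 2} : Set ℕ),
      ∃ sm s0 sp : ℕ,
        (S : ℝ) / 36 ≤ (sp : ℝ) ∧ 0 < s0 ∧
        (sm : ℤ) * ((m / (S / 2) : ℕ) - 1) + (s0 : ℤ) * ((m / (S / 2) : ℕ))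
          + (sp : ℤ) * ((m / (S / 2) : ℕ) + 1) = (m : ℤ) :=
  stmt_0_general n S hS
end

section
/- Let μ and ν be probability measures on a finite set with μ(x)/ν(x) well-defined (ν > 0). Define kl(u, v) = u·ln(u/v) + (1-u)·ln((1-u)/(1-v)) for u, v ∈ (0,1). Then for u, v ∈ (0,1): kl(u, v) ≥ (1-u)·ln(1/(1-v)) - ln 2. -/
/-! Splitting the logarithms, `kl(u,v) = -h(u) - u ln v + (1-u) ln(1/(1-v))` with `h` the binary
entropy. Since `h(u) ≤ ln 2` and `-u ln v ≥ 0`, the bound follows. -/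

open Real

/-- For the binary KL divergence `kl(u,v) = u·ln(u/v) + (1-u)·ln((1-u)/(1-v))` and
`u, v ∈ (0,1)`: `kl(u,v) ≥ (1-u)·ln(1/(1-v)) - ln 2`. -/
theorem stmt_16 (u v : ℝ) (hu : u ∈ Set.Ioo (0 : ℝ) 1) (hv : v ∈ Set.Ioo (0 : ℝ) 1) :
    (1 - u) * Real.log (1 / (1 - v)) - Real.log 2
      ≤ u * Real.log (u / v) + (1 - u) * Real.log ((1 - u) / (1 - v)) := by
  obtain ⟨hu0, hu1⟩ := hu
  obtain ⟨hv0, hv1⟩ := hv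
  have hentropy : binEntropy u ≤ log 2 := binEntropy_le_log_two
  have hcross : u * log v ≤ 0 := mul_nonpos_of_nonneg_of_nonpos hu0.le (log_nonpos hv0.le hv1.le)
  rw [binEntropy, log_inv, log_inv] at hentropy
  rw [log_div hu0.ne' hv0.ne', log_div (sub_pos.2 hu1).ne' (sub_pos.2 hv1).ne', one_div, log_inv]
  linarith
end

section
/- Let q : X → [0,1] with Σ_{x∈X} q(x) = 1 on a finite set X of size n, let U : X → ℝ≥0, let N ≥ 1 be an integer, and let L ≥ 1. Suppose for all y: |q̂(y) - q(y)| ≤ √(q(y)·L/N) + 2L/(3N), and let H ≥ 1. Define G = {y : q(y)·N ≥ H²·L}. Then Σ_{y} |q̂(y) - q(y)|·U(y) ≤ (1/H)·Σ_y q(y)·U(y) + 2·n·‖U‖_∞·H·L/N. -/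
open Finset

/- Write `√(q L / N) = √((q / H) · (H L / N))`. This geometric mean is at most the sum of its
two factors: the first sums to `(1/H) Σ q U` against `U`, while the second, together with the
additive term `2L/(3N) ≤ H L / N`, costs at most `2 ‖U‖_∞ H L / N` per point. -/

lemma Real.sqrt_mul_le_add {a b : ℝ} (ha : 0 ≤ a) (hb : 0 ≤ b) : √(a * b) ≤ a + b :=
  Real.sqrt_le_iff.mpr ⟨by positivity, by nlinarith⟩

lemma abs_mul_le_of_abs_le_sqrt_add {d q u M N L H : ℝ} (hq : 0 ≤ q) (hu : 0 ≤ u) (huM : u ≤ M)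
    (hN : 0 < N) (hL : 0 ≤ L) (hH : 2 / 3 ≤ H)
    (hd : |d| ≤ √(q * L / N) + 2 * L / (3 * N)) :
    |d| * u ≤ q / H * u + 2 * M * H * L / N := by
  have hH0 : 0 < H := by linarith
  have hsqrt : √(q * L / N) ≤ q / H + H * L / N := by
    have : q * L / N = q / H * (H * L / N) := by field_simp
    rw [this]
    exact Real.sqrt_mul_le_add (by positivity) (by positivity)
  have hslack : 2 * L / (3 * N) ≤ H * L / N := by
    rw [div_le_div_iff₀ (by positivity) hN]
    nlinarith [mul_nonneg (mul_nonneg (sub_nonneg.mpr hH) hL) hN.le]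
  calc |d| * u ≤ (q / H + 2 * (H * L / N)) * u := by gcongr; linarith
    _ = q / H * u + 2 * (H * L / N) * u := by ring
    _ ≤ q / H * u + 2 * (H * L / N) * M := by gcongr
    _ = q / H * u + 2 * M * H * L / N := by ring

theorem stmt_17_general {X : Type*} [Fintype X] [Nonempty X] (n : ℕ)
    (hcard : Fintype.card X = n)
    (q qhat U : X → ℝ) (hq0 : ∀ x, 0 ≤ q x)
    (hU : ∀ x, 0 ≤ U x)
    (N : ℕ) (hN : 1 ≤ N) (L : ℝ) (hL : 1 ≤ L) (H : ℝ) (hH : 1 ≤ H)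
    (hdev : ∀ y, |qhat y - q y| ≤ Real.sqrt (q y * L / (N : ℝ)) + 2 * L / (3 * (N : ℝ))) :
    ∑ y, |qhat y - q y| * U y
      ≤ (1 / H) * ∑ y, q y * U y
        + 2 * (n : ℝ) * (Finset.univ.sup' Finset.univ_nonempty U) * H * L / (N : ℝ) := by
  set M := Finset.univ.sup' Finset.univ_nonempty U
  have hN0 : (0 : ℝ) < N := by exact_mod_cast hN
  calc ∑ y, |qhat y - q y| * U y
      ≤ ∑ y, (q y / H * U y + 2 * M * H * L / N) :=
        sum_le_sum fun y _ => abs_mul_le_of_abs_le_sqrt_add (hq0 y) (hU y)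
          (le_sup' U (mem_univ y)) hN0 (by linarith) (by linarith) (hdev y)
    _ = (1 / H) * ∑ y, q y * U y + 2 * (n : ℝ) * M * H * L / N := by
        rw [sum_add_distrib, sum_const, card_univ, hcard, nsmul_eq_mul, mul_sum]
        congr 1
        · exact sum_congr rfl fun y _ => by ring
        · ring

/-- Splitting an emission-estimation error sum: if `q` is a probability vector on a
finite set `X` of size `n`, `U ≥ 0`, `N ≥ 1`, `L ≥ 1`, `H ≥ 1`, and the estimate `q̂`
satisfies `|q̂(y) - q(y)| ≤ √(q(y)·L/N) + 2L/(3N)` for all `y`, then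
`Σ_y |q̂(y) - q(y)|·U(y) ≤ (1/H)·Σ_y q(y)·U(y) + 2·n·‖U‖_∞·H·L/N`. -/
theorem stmt_17 {X : Type*} [Fintype X] [Nonempty X] (n : ℕ)
    (hcard : Fintype.card X = n)
    (q qhat U : X → ℝ) (hq0 : ∀ x, 0 ≤ q x) (hq1 : ∀ x, q x ≤ 1)
    (hqsum : ∑ x, q x = 1) (hU : ∀ x, 0 ≤ U x)
    (N : ℕ) (hN : 1 ≤ N) (L : ℝ) (hL : 1 ≤ L) (H : ℝ) (hH : 1 ≤ H)
    (hdev : ∀ y, |qhat y - q y| ≤ Real.sqrt (q y * L / (N : ℝ)) + 2 * L / (3 * (N : ℝ))) :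
    ∑ y, |qhat y - q y| * U y
      ≤ (1 / H) * ∑ y, q y * U y
        + 2 * (n : ℝ) * (Finset.univ.sup' Finset.univ_nonempty U) * H * L / (N : ℝ) :=
  stmt_17_general n hcard q qhat U hq0 hU N hN L hL H hH hdev
end
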